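/- The commutator UV − VU is the diagonal matrix with entries in B: UV − VU = diag(−(n−1)t_0 − t_1 − ⋯ − t_n, t_0 + t_1, t_0 + t_2, …, t_0 + t_n). -/

import Mathlib

/-!
Context: `B = ℂ[t₀,…,tₙ]`, `R = B⟨x,y⟩/(xy − yx − t₀)`, and `U`, `V` the
`(n+1)×(n+1)` matrices over `R` defined below (restrictions of `u^t`, `v^t`).
Statement 16: the commutator `UV − VU` is the diagonal matrix with entries in `B`:
`UV − VU = diag(−(n−1)t₀ − t₁ − ⋯ − tₙ, t₀ + t₁, t₀ + t₂, …, t₀ + tₙ)`.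
-/

noncomputable section

/-- The polynomial base ring `B = ℂ[t₀,…,tₙ]`. -/
abbrev Bpoly (n : ℕ) : Type := MvPolynomial (Fin (n + 1)) ℂ

/-- The defining relation `xy = yx + t₀` of `R = B⟨x,y⟩/(xy − yx − t₀)`,
with `x = ι 0`, `y = ι 1`. -/
inductive Rrel (n : ℕ) : FreeAlgebra (Bpoly n) (Fin 2) → FreeAlgebra (Bpoly n) (Fin 2) → Prop
  | comm : Rrel n (FreeAlgebra.ι (Bpoly n) 0 * FreeAlgebra.ι (Bpoly n) 1)
      (FreeAlgebra.ι (Bpoly n) 1 * FreeAlgebra.ι (Bpoly n) 0 +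
        algebraMap (Bpoly n) (FreeAlgebra (Bpoly n) (Fin 2)) (MvPolynomial.X 0))

/-- `R = B⟨x,y⟩/(xy − yx − t₀)`. -/
abbrev Rring (n : ℕ) : Type := RingQuot (Rrel n)

/-- `x ∈ R`. -/
def Rx (n : ℕ) : Rring n := RingQuot.mkAlgHom (Bpoly n) (Rrel n) (FreeAlgebra.ι (Bpoly n) 0)

/-- `y ∈ R`. -/
def Ry (n : ℕ) : Rring n := RingQuot.mkAlgHom (Bpoly n) (Rrel n) (FreeAlgebra.ι (Bpoly n) 1)

/-- `tⱼ ∈ R`, the image of the deformation parameter `tⱼ` (`0 ≤ j ≤ n`). -/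
def Rt (n : ℕ) (j : ℕ) : Rring n :=
  algebraMap (Bpoly n) (Rring n) (MvPolynomial.X (Fin.ofNat (n + 1) j))

/-- `d i = xy + (i−1)t₀ + t₁ + ⋯ + tᵢ ∈ R` (for `1 ≤ i ≤ n`). -/
def dEl (n : ℕ) (i : ℕ) : Rring n :=
  Rx n * Ry n + (i - 1) • Rt n 0 + ∑ j ∈ Finset.Icc 1 i, Rt n j

/-- The matrix `U` over `R` (restriction of `u^t` to the chart `𝓡₀`):
`U_{0,1} = x`, `U_{i,i+1} = xy + (i−1)t₀ + t₁ + ⋯ + tᵢ` for `1 ≤ i ≤ n−1`,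
`U_{n,0} = xy + (n−1)t₀ + t₁ + ⋯ + tₙ`, all other entries `0`. -/
def Umat (n : ℕ) : Matrix (Fin (n + 1)) (Fin (n + 1)) (Rring n) :=
  Matrix.of fun i j => if j = i + 1 then (if i = 0 then Rx n else dEl n (i : ℕ)) else 0

/-- The matrix `V` over `R` (restriction of `v^t` to the chart `𝓡₀`):
`V_{1,0} = y`, `V_{i+1,i} = 1` for `1 ≤ i ≤ n−1`, `V_{0,n} = 1`,
all other entries `0`. -/
def Vmat (n : ℕ) : Matrix (Fin (n + 1)) (Fin (n + 1)) (Rring n) :=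
  Matrix.of fun i j => if i = j + 1 then (if j = 0 then Ry n else 1) else 0


lemma Rkey (n : ℕ) : Rx n * Ry n = Ry n * Rx n + Rt n 0 := by
  have h := RingQuot.mkAlgHom_rel (Bpoly n) (Rrel.comm (n := n))
  simp only [map_mul, map_add, AlgHom.commutes] at h
  simpa [Rx, Ry, Rt] using h

lemma fin_mk_sub_one (n m : ℕ) (h : m + 1 < n + 1) :
    (⟨m + 1, h⟩ : Fin (n + 1)) - 1 = ⟨m, by omega⟩ := by
  rw [sub_eq_iff_eq_add]
  apply Fin.ext
  have h1 : 1 % (n + 1) = 1 := Nat.mod_eq_of_lt (by omega)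
  simp [Fin.add_def, Fin.val_one', h1, Nat.mod_eq_of_lt h]

lemma fin_zero_sub_one (n : ℕ) (hn : 1 ≤ n) :
    (0 : Fin (n + 1)) - 1 = ⟨n, by omega⟩ := by
  rw [sub_eq_iff_eq_add]
  apply Fin.ext
  have h1 : 1 % (n + 1) = 1 := Nat.mod_eq_of_lt (by omega)
  simp [Fin.add_def, Fin.val_one', h1]

theorem stmt16 (n : ℕ) (hn : 1 ≤ n) :
    Umat n * Vmat n - Vmat n * Umat n =
      Matrix.diagonal (fun i : Fin (n + 1) =>
        if (i : ℕ) = 0 then -((n - 1) • Rt n 0 + ∑ j ∈ Finset.Icc 1 n, Rt n j)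
        else Rt n 0 + Rt n (i : ℕ)) := by
  ext i k
  rw [Matrix.sub_apply, Matrix.mul_apply, Matrix.mul_apply, Matrix.diagonal_apply]
  rw [Finset.sum_eq_single (i + 1) ?h1 ?h2, Finset.sum_eq_single (i - 1) ?h3 ?h4]
  case h1 => intro j _ hj; simp [Umat, hj]
  case h2 => simp
  case h3 =>
    intro j _ hj
    have hne : ¬ i = j + 1 := fun h => hj (by rw [h, add_sub_cancel_right])
    simp [Vmat, hne]
  case h4 => simp
  by_cases hik : i = k
  · subst hik
    have e1 : Umat n i (i + 1) = if i = 0 then Rx n else dEl n (i : ℕ) := by simp [Umat]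
    have e2 : Vmat n (i + 1) i = if i = 0 then Ry n else 1 := by simp [Vmat]
    have e3 : Vmat n i (i - 1) = if i - 1 = 0 then Ry n else 1 := by
      simp [Vmat, sub_add_cancel]
    have e4 : Umat n (i - 1) i = if i - 1 = 0 then Rx n else dEl n ((i - 1 : Fin (n + 1)) : ℕ) := by
      simp [Umat, sub_add_cancel]
    rw [e1, e2, e3, e4, if_pos rfl]
    obtain ⟨iv, hi⟩ := i
    match iv, hi with
    | 0, hi =>
      have h0 : (⟨0, hi⟩ : Fin (n + 1)) = 0 := rfl
      rw [h0, fin_zero_sub_one n hn]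
      have hne : (⟨n, by omega⟩ : Fin (n + 1)) ≠ 0 := by
        simp [Fin.ext_iff]; omega
      rw [if_pos rfl, if_pos rfl, if_neg hne, if_neg hne]
      simp only [Fin.val_zero, one_mul, dEl, if_true]
      abel
    | 1, hi =>
      have h1 : (⟨1, hi⟩ : Fin (n + 1)) ≠ 0 := by simp [Fin.ext_iff]
      rw [fin_mk_sub_one n 0 hi]
      have h2 : (⟨0, by omega⟩ : Fin (n + 1)) = 0 := rfl
      rw [if_neg h1, if_neg h1, h2, if_pos rfl, if_pos rfl]
      simp only [Fin.val_one', Nat.mod_eq_of_lt hi]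
      have : ¬ (1 : ℕ) = 0 := by omega
      rw [if_neg this]
      simp only [dEl, Finset.Icc_self, Finset.sum_singleton, Nat.sub_self, zero_smul,
        add_zero, mul_one, Rkey n]
      abel
    | m + 2, hi =>
      have h1 : (⟨m + 2, hi⟩ : Fin (n + 1)) ≠ 0 := by simp [Fin.ext_iff]
      rw [fin_mk_sub_one n (m + 1) hi]
      have h2 : (⟨m + 1, by omega⟩ : Fin (n + 1)) ≠ 0 := by simp [Fin.ext_iff]
      rw [if_neg h1, if_neg h1, if_neg h2, if_neg h2]
      simp only [Fin.val_mk]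
      have : ¬ (m + 2 : ℕ) = 0 := by omega
      rw [if_neg this]
      simp only [dEl, mul_one, one_mul,
        show m + 2 - 1 = m + 1 from rfl, show m + 1 - 1 = m from rfl]
      rw [Finset.sum_Icc_succ_top (by omega : 1 ≤ m + 2), succ_nsmul]
      abel
  · have v1 : Vmat n (i + 1) k = 0 := by
      have : ¬ (i + 1 : Fin (n + 1)) = k + 1 := by simpa using hik
      simp [Vmat, this]
    have v2 : Umat n (i - 1) k = 0 := by
      simp [Umat, sub_add_cancel, Ne.symm hik]
    rw [v1, v2, if_neg hik, mul_zero, mul_zero]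
    exact sub_self (0 : Rring n)

end
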